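/- arXiv:2206.05356 — 2 statements merged into one kernel-verified Lean document; each statement's English description precedes it below -/
import Mathlib

section
/- Let m ≥ 1 and ε = 1/m. Define g on nonempty finite sets J of rationals by g(J) = min(max J, min J + ε). If J' ⊆ J are nonempty finite sets of rationals with max J − min J ≤ 2ε, then |g(J) − g(J')| ≤ ε. -/
/-- Key fact behind the one-round ε-approximate agreement rule in IIS:
with ε = 1/m, g(J) = min(max J, min J + ε); if J' ⊆ J are nonempty finite
sets of rationals with max J − min J ≤ 2ε, then |g(J) − g(J')| ≤ ε. -/
theorem stmt_0 (m : ℕ) (hm : 1 ≤ m) (ε : ℚ) (hε : ε = 1 / m)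
    (J J' : Finset ℚ) (hJ' : J'.Nonempty) (hsub : J' ⊆ J) (hJ : J.Nonempty)
    (hspread : J.max' hJ - J.min' hJ ≤ 2 * ε) :
    |min (J.max' hJ) (J.min' hJ + ε) - min (J'.max' hJ') (J'.min' hJ' + ε)| ≤ ε := by
  have hε0 : 0 < ε := by
    rw [hε]
    positivity
  have h1 : J.min' hJ ≤ J'.min' hJ' :=
    Finset.min'_le _ _ (hsub (J'.min'_mem hJ'))
  have h2 : J'.max' hJ' ≤ J.max' hJ :=
    Finset.le_max' _ _ (hsub (J'.max'_mem hJ'))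
  have h3 : J'.min' hJ' ≤ J'.max' hJ' := Finset.min'_le _ _ (Finset.max'_mem _ _)
  have h4 : J.min' hJ ≤ J.max' hJ := Finset.min'_le _ _ (Finset.max'_mem _ _)
  rw [abs_le]
  constructor <;>
  · rcases le_total (J.max' hJ) (J.min' hJ + ε) with h | h <;>
    rcases le_total (J'.max' hJ') (J'.min' hJ' + ε) with h' | h' <;>
    simp only [min_eq_left, min_eq_right, h, h'] <;> linarith
end

section
/- Let I be a nonempty finite set and M = ((P₀, I₀), ..., (P_r, I_r)) a collect-matrix (P₀ = I, I₀,...,I_r a partition of I, and ⋃_{j=s}^r I_j ⊆ P_s for all s) which additionally satisfies the immediate-snapshot condition: for all s, all p ∈ I_s and q ∈ P_s, if q ∈ I_t then P_t ⊆ P_s. Then for any two indices i, j ∈ I with views V_i = P_s (i ∈ I_s) and V_j = P_t (j ∈ I_t): j ∈ V_i or i ∈ V_j, and if j ∈ V_i then V_j ⊆ V_i. -/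
/-- Immediate-snapshot matrices yield the chromatic-subdivision properties:
for processes i ∈ Q s, j ∈ Q t with views P s, P t, either j ∈ P s or
i ∈ P t, and if j ∈ P s then P t ⊆ P s. -/
theorem stmt_14 {α : Type*} (I : Finset α) (hI : I.Nonempty) (r : ℕ)
    (P Q : Fin (r + 1) → Finset α)
    (hP0 : P 0 = I) (hPsub : ∀ s, P s ⊆ I)
    (hQne : ∀ s, (Q s).Nonempty)
    (hQdisj : ∀ s t, s ≠ t → Disjoint (Q s) (Q t))
    (hQcover : ∀ i ∈ I, ∃ s, i ∈ Q s)
    (hQP : ∀ s t : Fin (r + 1), s ≤ t → Q t ⊆ P s)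
    (hIS : ∀ s : Fin (r + 1), ∀ p ∈ Q s, ∀ q ∈ P s,
      ∀ t : Fin (r + 1), q ∈ Q t → P t ⊆ P s) :
    ∀ s t : Fin (r + 1), ∀ i ∈ Q s, ∀ j ∈ Q t,
      (j ∈ P s ∨ i ∈ P t) ∧ (j ∈ P s → P t ⊆ P s) := by
  intro s t i hi j hj
  refine ⟨?_, fun hjs => hIS s i hi j hjs t hj⟩
  rcases le_total s t with h | h
  · exact Or.inl (hQP s t h hj)
  · exact Or.inr (hQP t s h hi)
end
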